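/- arXiv:2406.09746 — 2 statements merged into one kernel-verified Lean document; each statement's English description precedes it below -/
import Mathlib

section
/- For ν > 0, the series ∑_{k=1}^∞ q_{k,ν}(0)²/λ_k diverges; in fact for k ≥ 1 the even-indexed terms satisfy q_{2k,ν}(0)²/λ_{2k} = (ν+2k)/ν, so the partial sums are unbounded. -/
open Finset

/-- The polynomials `q_{n,ν}` defined by `q_0 = 1`, `q_1(x) = x/2`, and
`q_{n+1}(x) = x q_n(x) - β_n q_{n-1}(x)` where `β_n = 1/(4(ν+n-1)(ν+n))`. -/
noncomputable def qpoly (ν : ℝ) : ℕ → ℝ → ℝ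
  | 0, _ => 1
  | 1, x => x / 2
  | n + 2, x => x * qpoly ν (n + 1) x - (1 / (4 * (ν + n) * (ν + n + 1))) * qpoly ν n x

/-- `β_n = 1/(4(ν+n-1)(ν+n))`. -/
noncomputable def betaq (ν : ℝ) (n : ℕ) : ℝ := 1 / (4 * (ν + n - 1) * (ν + n))

/-- `λ_0 = 1`, `λ_n = β_1 β_2 ⋯ β_n`. -/
noncomputable def lamq (ν : ℝ) (n : ℕ) : ℝ := ∏ j ∈ Finset.range n, betaq ν (j + 1)

lemma betaq_pos (ν : ℝ) (hν : 0 < ν) (n : ℕ) : 0 < betaq ν (n + 1) := by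
  have h1 : (0:ℝ) < ν + (n + 1 : ℕ) - 1 := by push_cast; linarith [Nat.cast_nonneg (α := ℝ) n]
  have h2 : (0:ℝ) < ν + (n + 1 : ℕ) := by push_cast; linarith [Nat.cast_nonneg (α := ℝ) n]
  have : (0:ℝ) < 4 * (ν + (n + 1 : ℕ) - 1) * (ν + (n + 1 : ℕ)) := by positivity
  exact div_pos one_pos this

lemma lamq_pos (ν : ℝ) (hν : 0 < ν) (n : ℕ) : 0 < lamq ν n := by
  induction n with
  | zero => simp [lamq]
  | succ n ih =>
    rw [lamq, Finset.prod_range_succ]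
    exact mul_pos ih (betaq_pos ν hν n)

lemma key (ν : ℝ) (hν : 0 < ν) (k : ℕ) :
    (qpoly ν (2 * k) 0) ^ 2 = lamq ν (2 * k) * ((ν + 2 * k) / ν) := by
  induction k with
  | zero => simp [qpoly, lamq, div_self hν.ne']
  | succ k ih =>
    have h2k : 2 * (k + 1) = (2 * k) + 1 + 1 := by ring
    have hq : qpoly ν (2 * (k + 1)) 0 =
        -(1 / (4 * (ν + 2 * k) * (ν + 2 * k + 1))) * qpoly ν (2 * k) 0 := by
      rw [h2k]
      show qpoly ν (2 * k + 2) 0 = _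
      rw [show qpoly ν (2 * k + 2) 0 = 0 * qpoly ν (2 * k + 1) 0 -
          (1 / (4 * (ν + (2 * k : ℕ)) * (ν + (2 * k : ℕ) + 1))) * qpoly ν (2 * k) 0
        from rfl]
      push_cast
      ring
    have hlam : lamq ν (2 * (k + 1)) =
        lamq ν (2 * k) * betaq ν (2 * k + 1) * betaq ν (2 * k + 2) := by
      rw [h2k]
      show lamq ν (2 * k + 1 + 1) = _
      rw [lamq, Finset.prod_range_succ, Finset.prod_range_succ, ← lamq]
    have hc1 : (0:ℝ) < ν + 2 * k := by positivity
    have hc2 : (0:ℝ) < ν + 2 * k + 1 := by linarith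
    have hc3 : (0:ℝ) < ν + 2 * k + 2 := by linarith
    have hb1 : betaq ν (2 * k + 1) = 1 / (4 * (ν + 2 * k) * (ν + 2 * k + 1)) := by
      unfold betaq; push_cast; ring_nf
    have hb2 : betaq ν (2 * k + 2) = 1 / (4 * (ν + 2 * k + 1) * (ν + 2 * k + 2)) := by
      unfold betaq; push_cast; ring_nf
    rw [hq, hlam, hb1, hb2, mul_pow, neg_pow, ih]
    push_cast
    field_simp
    ring

/-- For `ν > 0` the series `∑_{k≥1} q_{k,ν}(0)²/λ_k` diverges; the even-indexed
terms equal `(ν+2k)/ν`. -/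
theorem qpoly_zero_series_diverges (ν : ℝ) (hν : 0 < ν) :
    (∀ k : ℕ, 1 ≤ k → (qpoly ν (2 * k) 0) ^ 2 / lamq ν (2 * k) = (ν + 2 * k) / ν) ∧
      ¬ Summable (fun k : ℕ => (qpoly ν (k + 1) 0) ^ 2 / lamq ν (k + 1)) := by
  have heven : ∀ k : ℕ, (qpoly ν (2 * k) 0) ^ 2 / lamq ν (2 * k) = (ν + 2 * k) / ν := by
    intro k
    rw [key ν hν k, mul_comm, mul_div_assoc, div_self (lamq_pos ν hν (2 * k)).ne', mul_one]
  refine ⟨fun k _ => heven k, fun hs => ?_⟩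
  have h0 := hs.tendsto_atTop_zero
  have hg : Filter.Tendsto (fun m : ℕ => 2 * m + 1) Filter.atTop Filter.atTop := by
    apply Filter.tendsto_atTop_mono (fun m => by omega : ∀ m : ℕ, m ≤ 2 * m + 1)
      Filter.tendsto_id
  have h1 : Filter.Tendsto
      (fun m : ℕ => (qpoly ν (2 * m + 1 + 1) 0) ^ 2 / lamq ν (2 * m + 1 + 1))
      Filter.atTop (nhds 0) := h0.comp hg
  have h2 : ∀ m : ℕ, (qpoly ν (2 * m + 1 + 1) 0) ^ 2 / lamq ν (2 * m + 1 + 1)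
      = (ν + 2 * (m + 1)) / ν := by
    intro m
    have : 2 * m + 1 + 1 = 2 * (m + 1) := by ring
    rw [this, heven (m + 1)]; push_cast; ring_nf
  have hge : ∀ m : ℕ, (1:ℝ) ≤ (qpoly ν (2 * m + 1 + 1) 0) ^ 2 / lamq ν (2 * m + 1 + 1) := by
    intro m
    rw [h2 m]
    rw [le_div_iff₀ hν, one_mul]
    have : (0:ℝ) ≤ (2 * (m + 1) : ℕ) := by positivity
    push_cast at this ⊢
    linarith
  have := ge_of_tendsto h1 (Filter.Eventually.of_forall hge)
  linarith
end

section
/- The polynomials p_{n,ν} defined by p_{n,ν}(x) = (2/q_{n,ν}(1/ν))·(q_{n,ν}(1/ν)·q_{n+2,ν}(x) − q_{n,ν}(x)·q_{n+2,ν}(1/ν))/(x² − ν^{−2}) satisfy the three-term recurrence p_{n,ν}(x) = x·p_{n−1,ν}(x) − γ_n·p_{n−2,ν}(x) for n ≥ 2, where γ_n = (1/(4(ν+n−1)(ν+n−2)))·(q_{n+1,ν}(1/ν)·q_{n−2,ν}(1/ν))/(q_{n,ν}(1/ν)·q_{n−1,ν}(1/ν)), with p_{0,ν}(x)=1 and p_{1,ν}(x)=x.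 -/
/-- `p_{n,ν}(x) = (2/q_{n,ν}(1/ν)) (q_{n,ν}(1/ν) q_{n+2,ν}(x) - q_{n,ν}(x) q_{n+2,ν}(1/ν)) / (x²-ν⁻²)`. -/
noncomputable def ppoly (ν : ℝ) (n : ℕ) (x : ℝ) : ℝ :=
  (2 / qpoly ν n (1 / ν)) *
    (qpoly ν n (1 / ν) * qpoly ν (n + 2) x - qpoly ν n x * qpoly ν (n + 2) (1 / ν)) /
      (x ^ 2 - (1 / ν) ^ 2)

/-- `γ_n` for `n ≥ 2`. -/
noncomputable def gammaq (ν : ℝ) (n : ℕ) : ℝ :=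
  (1 / (4 * (ν + n - 1) * (ν + n - 2))) *
    (qpoly ν (n + 1) (1 / ν) * qpoly ν (n - 2) (1 / ν)) /
      (qpoly ν n (1 / ν) * qpoly ν (n - 1) (1 / ν))

set_option maxHeartbeats 1000000 in
private lemma key_identity (x a D c0 c1 c2 g u v s t B Q2x Q3x Q4x Q3a Q4a : ℝ)
    (hD : D ≠ 0) (hs : s ≠ 0) (ht : t ≠ 0) (hB : B ≠ 0)
    (hBdef : B = a * t - c0 * s)
    (h2x : Q2x = x * v - c0 * u) (h3x : Q3x = x * Q2x - c1 * v) (h4x : Q4x = x * Q3x - c2 * Q2x)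
    (h3a : Q3a = a * B - c1 * t) (h4a : Q4a = a * Q3a - c2 * B)
    (hg : g = c0 * (Q3a * s) / (B * t)) :
    2 / B * (B * Q4x - Q2x * Q4a) / D =
      x * (2 / t * (t * Q3x - v * Q3a) / D) - g * (2 / s * (s * Q2x - u * B) / D) := by
  subst hg h4a h3a h4x h3x h2x hBdef
  field_simp
  ring

/-- The three-term recurrence for the polynomials `p_{n,ν}`, with `p_0 = 1`, `p_1(x) = x`. -/
theorem ppoly_recurrence (ν : ℝ) (hν : 0 < ν)
    (hq : ∀ n : ℕ, qpoly ν n (1 / ν) ≠ 0)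
    (x : ℝ) (hx : x ^ 2 ≠ (1 / ν) ^ 2) :
    ppoly ν 0 x = 1 ∧ ppoly ν 1 x = x ∧
      ∀ n : ℕ, 2 ≤ n → ppoly ν n x = x * ppoly ν (n - 1) x - gammaq ν n * ppoly ν (n - 2) x := by
  have hν' : ν ≠ 0 := ne_of_gt hν
  have hD : x ^ 2 - (1 / ν) ^ 2 ≠ 0 := sub_ne_zero.mpr hx
  refine ⟨?_, ?_, ?_⟩
  · simp only [ppoly, qpoly]
    push_cast
    rw [div_eq_iff hD]
    field_simp
    ring
  · simp only [ppoly]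
    simp only [qpoly]
    push_cast
    have h1 : qpoly ν 1 (1/ν) ≠ 0 := hq 1
    simp only [qpoly] at h1
    rw [div_eq_iff hD]
    field_simp
    ring
  · intro n hn
    obtain ⟨m, rfl⟩ : ∃ m, n = m + 2 := ⟨n - 2, by omega⟩
    have e2 : ∀ y, qpoly ν (m+2) y
        = y * qpoly ν (m + 1) y - (1 / (4 * (ν + m) * (ν + m + 1))) * qpoly ν m y := by
      intro y; rw [qpoly]
    have e3 : ∀ y, qpoly ν (m+3) y
        = y * qpoly ν (m + 2) y - (1 / (4 * (ν + m + 1) * (ν + m + 2))) * qpoly ν (m+1) y := by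
      intro y; rw [show m+3 = (m+1)+2 from rfl, qpoly]; push_cast; ring
    have e4 : ∀ y, qpoly ν (m+4) y
        = y * qpoly ν (m + 3) y - (1 / (4 * (ν + m + 2) * (ν + m + 3))) * qpoly ν (m+2) y := by
      intro y; rw [show m+4 = (m+2)+2 from rfl, qpoly]; push_cast; ring
    have hs : qpoly ν m (1/ν) ≠ 0 := hq m
    have ht : qpoly ν (m+1) (1/ν) ≠ 0 := hq (m+1)
    have hB : qpoly ν (m+2) (1/ν) ≠ 0 := hq (m+2)
    have h0 : ν + (m:ℝ) ≠ 0 := by positivity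
    have h1 : ν + (m:ℝ) + 1 ≠ 0 := by positivity
    simp only [ppoly, gammaq, show m+2-1 = m+1 from rfl, show m+2-2 = m from rfl,
      show m+2+2 = m+4 from rfl, show m+2+1 = m+3 from rfl, show m+1+2 = m+3 from rfl]
    exact key_identity x (1/ν) _ (1 / (4 * (ν + m) * (ν + m + 1)))
      (1 / (4 * (ν + m + 1) * (ν + m + 2))) (1 / (4 * (ν + m + 2) * (ν + m + 3))) _
      (qpoly ν m x) (qpoly ν (m+1) x) (qpoly ν m (1/ν)) (qpoly ν (m+1) (1/ν))
      (qpoly ν (m+2) (1/ν)) (qpoly ν (m+2) x) (qpoly ν (m+3) x) (qpoly ν (m+4) x)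
      (qpoly ν (m+3) (1/ν)) (qpoly ν (m+4) (1/ν))
      hD hs ht hB (e2 (1/ν)) (e2 x) (e3 x) (e4 x) (e3 (1/ν)) (e4 (1/ν))
      (by push_cast; ring)
end
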